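/- Let H be a normal subgroup of a group G with quotient F = G/H. Given a left-invariant mean ν_H on bounded functions on H and a left-invariant mean ν_F on bounded functions on F, the product mean ν_G defined by ν_G(f) = ν_F(Ht ↦ ν_H(x ↦ f(tx))) is a well-defined left-invariant mean on bounded functions on G. -/
import Mathlib


/-- Let `H ⊴ G` with quotient `F = G ⧸ H`. Given left-invariant means
`ν_H` on bounded functions on `H` and `ν_F` on bounded functions on `F`, the product mean
`ν_G (f) = ν_F (Ht ↦ ν_H (x ↦ f (t x)))` is a well-defined left-invariant mean on the
bounded functions on `G`. -/
theorem product_mean_well_defined_left_invariant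
    (G : Type*) [Group G] (H : Subgroup G) [H.Normal]
    (νH : (H → ℝ) → ℝ) (νF : (G ⧸ H → ℝ) → ℝ)
    -- `νH` is a left-invariant mean on bounded functions on `H`
    (hHadd : ∀ f g : H → ℝ, (∃ C, ∀ t, |f t| ≤ C) → (∃ C, ∀ t, |g t| ≤ C) →
      νH (f + g) = νH f + νH g)
    (hHsmul : ∀ (c : ℝ) (f : H → ℝ), (∃ C, ∀ t, |f t| ≤ C) → νH (c • f) = c * νH f)
    (hHpos : ∀ f : H → ℝ, (∃ C, ∀ t, |f t| ≤ C) → (∀ t, 0 ≤ f t) → 0 ≤ νH f)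
    (hHone : νH 1 = 1)
    (hHinv : ∀ (h : H) (f : H → ℝ), (∃ C, ∀ t, |f t| ≤ C) →
      νH (fun x => f (h * x)) = νH f)
    -- `νF` is a left-invariant mean on bounded functions on `F = G ⧸ H`
    (hFadd : ∀ f g : G ⧸ H → ℝ, (∃ C, ∀ t, |f t| ≤ C) → (∃ C, ∀ t, |g t| ≤ C) →
      νF (f + g) = νF f + νF g)
    (hFsmul : ∀ (c : ℝ) (f : G ⧸ H → ℝ), (∃ C, ∀ t, |f t| ≤ C) → νF (c • f) = c * νF f)
    (hFpos : ∀ f : G ⧸ H → ℝ, (∃ C, ∀ t, |f t| ≤ C) → (∀ t, 0 ≤ f t) → 0 ≤ νF f)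
    (hFone : νF 1 = 1)
    (hFinv : ∀ (q : G ⧸ H) (f : G ⧸ H → ℝ), (∃ C, ∀ t, |f t| ≤ C) →
      νF (fun x => f (q * x)) = νF f)
    -- the product mean
    (νG : (G → ℝ) → ℝ)
    (hνG : ∀ f : G → ℝ, νG f = νF fun q : G ⧸ H => νH fun x : H => f (q.out * x)) :
    -- well-definedness: the `H`-average depends only on the coset, and is bounded
    (∀ f : G → ℝ, (∃ C, ∀ t, |f t| ≤ C) → ∀ t t' : G, (t : G ⧸ H) = (t' : G ⧸ H) →
        (νH fun x : H => f (t * x)) = νH fun x : H => f (t' * x)) ∧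
    (∀ f : G → ℝ, (∃ C, ∀ t, |f t| ≤ C) →
        ∃ C, ∀ q : G ⧸ H, |νH fun x : H => f (q.out * x)| ≤ C) ∧
    -- `ν_G` is a left-invariant mean on bounded functions on `G`
    (∀ f g : G → ℝ, (∃ C, ∀ t, |f t| ≤ C) → (∃ C, ∀ t, |g t| ≤ C) →
        νG (f + g) = νG f + νG g) ∧
    (∀ (c : ℝ) (f : G → ℝ), (∃ C, ∀ t, |f t| ≤ C) → νG (c • f) = c * νG f) ∧
    (∀ f : G → ℝ, (∃ C, ∀ t, |f t| ≤ C) → (∀ t, 0 ≤ f t) → 0 ≤ νG f) ∧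
    νG 1 = 1 ∧
    (∀ (s : G) (f : G → ℝ), (∃ C, ∀ t, |f t| ≤ C) →
        νG (fun t => f (s * t)) = νG f) := by

  -- boundedness of νH from positivity and linearity
  have hHbound : ∀ (f : H → ℝ) (C : ℝ), (∀ t, |f t| ≤ C) → |νH f| ≤ C := by
    intro f C hf
    have hC0 : 0 ≤ C := le_trans (abs_nonneg _) (hf 1)
    have hfb : ∃ C', ∀ t, |f t| ≤ C' := ⟨C, hf⟩
    have h1b : ∃ C', ∀ t : H, |(1 : H → ℝ) t| ≤ C' := ⟨1, fun t => by simp⟩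
    have hCone : νH (C • (1 : H → ℝ)) = C := by
      rw [hHsmul C 1 h1b, hHone, mul_one]
    have hC1b : ∃ C', ∀ t : H, |(C • (1 : H → ℝ)) t| ≤ C' :=
      ⟨C, fun t => by simp [abs_of_nonneg hC0]⟩
    have hnegb : ∃ C', ∀ t, |(-f) t| ≤ C' := ⟨C, fun t => by simpa using hf t⟩
    have hHneg : νH (-f) = - νH f := by
      have := hHsmul (-1) f hfb
      simpa [neg_one_smul] using this
    have hup : 0 ≤ νH (C • (1 : H → ℝ) + (-f)) := by
      refine hHpos _ ⟨2 * C, fun t => ?_⟩ fun t => ?_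
      · have := abs_le.mp (hf t)
        simp only [Pi.add_apply, Pi.neg_apply, Pi.smul_apply, Pi.one_apply, smul_eq_mul, mul_one]
        rw [abs_le]; constructor <;> linarith
      · have := abs_le.mp (hf t)
        simp only [Pi.add_apply, Pi.neg_apply, Pi.smul_apply, Pi.one_apply, smul_eq_mul, mul_one]
        linarith
    have hdown : 0 ≤ νH (C • (1 : H → ℝ) + f) := by
      refine hHpos _ ⟨2 * C, fun t => ?_⟩ fun t => ?_
      · have := abs_le.mp (hf t)
        simp only [Pi.add_apply, Pi.smul_apply, Pi.one_apply, smul_eq_mul, mul_one]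
        rw [abs_le]; constructor <;> linarith
      · have := abs_le.mp (hf t)
        simp only [Pi.add_apply, Pi.smul_apply, Pi.one_apply, smul_eq_mul, mul_one]
        linarith
    rw [hHadd _ _ hC1b hnegb, hCone, hHneg] at hup
    rw [hHadd _ _ hC1b hfb, hCone] at hdown
    rw [abs_le]; constructor <;> linarith
  -- coset independence
  have key : ∀ f : G → ℝ, (∃ C, ∀ t, |f t| ≤ C) → ∀ t t' : G, (t : G ⧸ H) = (t' : G ⧸ H) →
      (νH fun x : H => f (t * x)) = νH fun x : H => f (t' * x) := by
    rintro f ⟨C, hf⟩ t t' htt'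
    have hmem : t⁻¹ * t' ∈ H := (QuotientGroup.eq).mp htt'
    set h : H := ⟨t⁻¹ * t', hmem⟩ with hh
    have := hHinv h (fun x : H => f (t * x)) ⟨C, fun x => hf _⟩
    have e : (fun x : H => f (t * ↑(h * x))) = fun x : H => f (t' * x) := by
      funext x
      congr 1
      push_cast [hh]
      group
    rw [e] at this
    exact this.symm
  refine ⟨key, ?_, ?_, ?_, ?_, ?_, ?_⟩
  · rintro f ⟨C, hf⟩
    exact ⟨C, fun q => hHbound _ C fun x => hf _⟩
  · rintro f g ⟨C, hf⟩ ⟨D, hg⟩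
    rw [hνG, hνG, hνG]
    have e : (fun q : G ⧸ H => νH fun x : H => (f + g) (q.out * x))
        = (fun q : G ⧸ H => νH fun x : H => f (q.out * x))
          + fun q : G ⧸ H => νH fun x : H => g (q.out * x) := by
      funext q
      simp only [Pi.add_apply]
      exact hHadd _ _ ⟨C, fun x => hf _⟩ ⟨D, fun x => hg _⟩
    rw [e]
    exact hFadd _ _ ⟨C, fun q => hHbound _ C fun x => hf _⟩
      ⟨D, fun q => hHbound _ D fun x => hg _⟩
  · rintro c f ⟨C, hf⟩
    rw [hνG, hνG]
    have e : (fun q : G ⧸ H => νH fun x : H => (c • f) (q.out * x))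
        = c • fun q : G ⧸ H => νH fun x : H => f (q.out * x) := by
      funext q
      simp only [Pi.smul_apply, smul_eq_mul]
      exact hHsmul c _ ⟨C, fun x => hf _⟩
    rw [e]
    exact hFsmul c _ ⟨C, fun q => hHbound _ C fun x => hf _⟩
  · rintro f ⟨C, hf⟩ hpos
    rw [hνG]
    refine hFpos _ ⟨C, fun q => hHbound _ C fun x => hf _⟩ fun q => ?_
    exact hHpos _ ⟨C, fun x => hf _⟩ fun x => hpos _
  · rw [hνG]
    have e : (fun q : G ⧸ H => νH fun x : H => (1 : G → ℝ) (q.out * x)) = (1 : G ⧸ H → ℝ) := by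
      funext q
      simp only [Pi.one_apply]
      exact hHone
    rw [e, hFone]
  · rintro s f ⟨C, hf⟩
    rw [hνG, hνG]
    have e : (fun q : G ⧸ H => νH fun x : H => f (s * (q.out * x)))
        = fun q : G ⧸ H => (fun p : G ⧸ H => νH fun x : H => f (p.out * x)) ((s : G ⧸ H) * q) := by
      funext q
      have h1 : ((s * q.out : G) : G ⧸ H) = (((s : G ⧸ H) * q).out : G ⧸ H) := by
        simp [QuotientGroup.mk_mul]
      have := key f ⟨C, hf⟩ (s * q.out) ((s : G ⧸ H) * q).out h1
      simpa [mul_assoc] using this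
    rw [e]
    exact hFinv (s : G ⧸ H) (fun p : G ⧸ H => νH fun x : H => f (p.out * x))
      ⟨C, fun q => hHbound _ C fun x => hf _⟩
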